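/- arXiv:2202.09700 — 4 statements merged into one kernel-verified Lean document; each statement's English description precedes it below -/
import Mathlib

section
/- Let k ≥ 1 and let c_1, c_2, c_3, c_4 : (Fin 4 → Fin k) → ℝ be the payoff functions of a game G ∈ 𝒢_{[4;k]}. Then G is symmetric if and only if all of the following hold for every strategy profile x : Fin 4 → Fin k: c_1(x) = c_2(x ∘ μ_1), c_2(x) = c_3(x ∘ μ_2), c_3(x) = c_4(x ∘ μ_3), c_4(x ∘ μ_1) = c_4(x), and c_4(x ∘ μ_2) = c_4(x), where μ_r is the transposition swapping coordinates r and r+1. -/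
private lemma aux_mul {k : ℕ} (c : Fin 4 → (Fin 4 → Fin k) → ℝ)
    (σ τ : Equiv.Perm (Fin 4))
    (hσ : ∀ i x, c i x = c (σ i) fun j => x (σ⁻¹ j))
    (hτ : ∀ i x, c i x = c (τ i) fun j => x (τ⁻¹ j)) :
    ∀ i x, c i x = c ((τ * σ) i) fun j => x ((τ * σ)⁻¹ j) := by
  intro i x
  rw [hσ i x, hτ (σ i)]
  rfl

/-- G ∈ 𝒢_{[4;k]} is symmetric iff for all profiles x:
c₁(x) = c₂(x∘μ₁), c₂(x) = c₃(x∘μ₂), c₃(x) = c₄(x∘μ₃), c₄(x∘μ₁) = c₄(x), c₄(x∘μ₂) = c₄(x).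
Players 1,2,3,4 are the indices 0,1,2,3 of `Fin 4`, and μ₁ = swap 0 1, μ₂ = swap 1 2,
μ₃ = swap 2 3 in 0-based coordinates. -/
theorem symmetric_four_player_iff (k : ℕ) (hk : 1 ≤ k)
    (c : Fin 4 → (Fin 4 → Fin k) → ℝ) :
    (∀ (σ : Equiv.Perm (Fin 4)) (i : Fin 4) (x : Fin 4 → Fin k),
        c i x = c (σ i) (fun j => x (σ⁻¹ j))) ↔
    (∀ x : Fin 4 → Fin k,
      c 0 x = c 1 (fun j => x (Equiv.swap (0 : Fin 4) 1 j)) ∧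
      c 1 x = c 2 (fun j => x (Equiv.swap (1 : Fin 4) 2 j)) ∧
      c 2 x = c 3 (fun j => x (Equiv.swap (2 : Fin 4) 3 j)) ∧
      c 3 (fun j => x (Equiv.swap (0 : Fin 4) 1 j)) = c 3 x ∧
      c 3 (fun j => x (Equiv.swap (1 : Fin 4) 2 j)) = c 3 x) := by
  constructor
  · intro h x
    refine ⟨?_, ?_, ?_, ?_, ?_⟩
    · have := h (Equiv.swap 0 1) 0 x
      simpa [Equiv.swap_inv] using this
    · have := h (Equiv.swap 1 2) 1 x
      simpa [Equiv.swap_inv] using this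
    · have := h (Equiv.swap 2 3) 2 x
      simpa [Equiv.swap_inv] using this
    · have := h (Equiv.swap 0 1) 3 x
      simp only [Equiv.swap_inv] at this
      rw [show Equiv.swap (0 : Fin 4) 1 3 = 3 from by decide] at this
      exact this.symm
    · have := h (Equiv.swap 1 2) 3 x
      simp only [Equiv.swap_inv] at this
      rw [show Equiv.swap (1 : Fin 4) 2 3 = 3 from by decide] at this
      exact this.symm
  · intro h
    set μ1 : Equiv.Perm (Fin 4) := Equiv.swap 0 1 with hμ1
    set μ2 : Equiv.Perm (Fin 4) := Equiv.swap 1 2 with hμ2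
    set μ3 : Equiv.Perm (Fin 4) := Equiv.swap 2 3 with hμ3
    have h1 : ∀ x : Fin 4 → Fin k, c 0 x = c 1 (fun j => x (μ1 j)) := fun x => (h x).1
    have h2 : ∀ x : Fin 4 → Fin k, c 1 x = c 2 (fun j => x (μ2 j)) := fun x => (h x).2.1
    have h3 : ∀ x : Fin 4 → Fin k, c 2 x = c 3 (fun j => x (μ3 j)) := fun x => (h x).2.2.1
    have h4 : ∀ x : Fin 4 → Fin k, c 3 (fun j => x (μ1 j)) = c 3 x := fun x => (h x).2.2.2.1
    have h5 : ∀ x : Fin 4 → Fin k, c 3 (fun j => x (μ2 j)) = c 3 x := fun x => (h x).2.2.2.2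
    -- chains to player 3
    have ch0 : ∀ x : Fin 4 → Fin k, c 0 x = c 3 (fun j => x (μ1 (μ2 (μ3 j)))) := by
      intro x
      rw [h1 x, h2 (fun j => x (μ1 j)), h3 (fun j => x (μ1 (μ2 j)))]
    have ch1 : ∀ x : Fin 4 → Fin k, c 1 x = c 3 (fun j => x (μ2 (μ3 j))) := by
      intro x
      rw [h2 x, h3 (fun j => x (μ2 j))]
    -- P μ1
    have Pμ1 : ∀ (i : Fin 4) (x : Fin 4 → Fin k), c i x = c (μ1 i) fun j => x (μ1⁻¹ j) := by
      have inv : μ1⁻¹ = μ1 := Equiv.swap_inv 0 1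
      intro i x
      rw [inv]
      fin_cases i
      · show c 0 x = c (μ1 0) fun j => x (μ1 j)
        rw [show μ1 (0 : Fin 4) = 1 from by rw [hμ1]; decide]
        exact h1 x
      · show c 1 x = c (μ1 1) fun j => x (μ1 j)
        rw [show μ1 (1 : Fin 4) = 0 from by rw [hμ1]; decide]
        have := h1 (fun j => x (μ1 j))
        simp only [show ∀ j : Fin 4, μ1 (μ1 j) = j from by rw [hμ1]; decide] at this
        exact this.symm
      · show c 2 x = c (μ1 2) fun j => x (μ1 j)
        rw [show μ1 (2 : Fin 4) = 2 from by rw [hμ1]; decide]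
        calc c 2 x = c 3 (fun j => x (μ3 j)) := h3 x
          _ = c 3 (fun j => x (μ3 (μ1 j))) := (h4 (fun j => x (μ3 j))).symm
          _ = c 3 (fun j => x (μ1 (μ3 j))) := by
              simp only [show ∀ j : Fin 4, μ3 (μ1 j) = μ1 (μ3 j) from by rw [hμ1, hμ3]; decide]
          _ = c 2 (fun j => x (μ1 j)) := (h3 (fun j => x (μ1 j))).symm
      · show c 3 x = c (μ1 3) fun j => x (μ1 j)
        rw [show μ1 (3 : Fin 4) = 3 from by rw [hμ1]; decide]
        exact (h4 x).symm
    -- P μ2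
    have Pμ2 : ∀ (i : Fin 4) (x : Fin 4 → Fin k), c i x = c (μ2 i) fun j => x (μ2⁻¹ j) := by
      have inv : μ2⁻¹ = μ2 := Equiv.swap_inv 1 2
      intro i x
      rw [inv]
      fin_cases i
      · show c 0 x = c (μ2 0) fun j => x (μ2 j)
        rw [show μ2 (0 : Fin 4) = 0 from by rw [hμ2]; decide]
        calc c 0 x = c 3 (fun j => x (μ1 (μ2 (μ3 j)))) := ch0 x
          _ = c 3 (fun j => x (μ1 (μ2 (μ3 (μ1 j))))) := (h4 (fun j => x (μ1 (μ2 (μ3 j))))).symm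
          _ = c 3 (fun j => x (μ2 (μ1 (μ2 (μ3 j))))) := by
              simp only [show ∀ j : Fin 4, μ1 (μ2 (μ3 (μ1 j))) = μ2 (μ1 (μ2 (μ3 j))) from by
                rw [hμ1, hμ2, hμ3]; decide]
          _ = c 0 (fun j => x (μ2 j)) := (ch0 (fun j => x (μ2 j))).symm
      · show c 1 x = c (μ2 1) fun j => x (μ2 j)
        rw [show μ2 (1 : Fin 4) = 2 from by rw [hμ2]; decide]
        exact h2 x
      · show c 2 x = c (μ2 2) fun j => x (μ2 j)
        rw [show μ2 (2 : Fin 4) = 1 from by rw [hμ2]; decide]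
        have := h2 (fun j => x (μ2 j))
        simp only [show ∀ j : Fin 4, μ2 (μ2 j) = j from by rw [hμ2]; decide] at this
        exact this.symm
      · show c 3 x = c (μ2 3) fun j => x (μ2 j)
        rw [show μ2 (3 : Fin 4) = 3 from by rw [hμ2]; decide]
        exact (h5 x).symm
    -- P μ3
    have Pμ3 : ∀ (i : Fin 4) (x : Fin 4 → Fin k), c i x = c (μ3 i) fun j => x (μ3⁻¹ j) := by
      have inv : μ3⁻¹ = μ3 := Equiv.swap_inv 2 3
      intro i x
      rw [inv]
      fin_cases i
      · show c 0 x = c (μ3 0) fun j => x (μ3 j)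
        rw [show μ3 (0 : Fin 4) = 0 from by rw [hμ3]; decide]
        calc c 0 x = c 3 (fun j => x (μ1 (μ2 (μ3 j)))) := ch0 x
          _ = c 3 (fun j => x (μ1 (μ2 (μ3 (μ2 j))))) := (h5 (fun j => x (μ1 (μ2 (μ3 j))))).symm
          _ = c 3 (fun j => x (μ3 (μ1 (μ2 (μ3 j))))) := by
              simp only [show ∀ j : Fin 4, μ1 (μ2 (μ3 (μ2 j))) = μ3 (μ1 (μ2 (μ3 j))) from by
                rw [hμ1, hμ2, hμ3]; decide]
          _ = c 0 (fun j => x (μ3 j)) := (ch0 (fun j => x (μ3 j))).symm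
      · show c 1 x = c (μ3 1) fun j => x (μ3 j)
        rw [show μ3 (1 : Fin 4) = 1 from by rw [hμ3]; decide]
        calc c 1 x = c 3 (fun j => x (μ2 (μ3 j))) := ch1 x
          _ = c 3 (fun j => x (μ2 (μ3 (μ2 j)))) := (h5 (fun j => x (μ2 (μ3 j)))).symm
          _ = c 3 (fun j => x (μ3 (μ2 (μ3 j)))) := by
              simp only [show ∀ j : Fin 4, μ2 (μ3 (μ2 j)) = μ3 (μ2 (μ3 j)) from by
                rw [hμ2, hμ3]; decide]
          _ = c 1 (fun j => x (μ3 j)) := (ch1 (fun j => x (μ3 j))).symm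
      · show c 2 x = c (μ3 2) fun j => x (μ3 j)
        rw [show μ3 (2 : Fin 4) = 3 from by rw [hμ3]; decide]
        exact h3 x
      · show c 3 x = c (μ3 3) fun j => x (μ3 j)
        rw [show μ3 (3 : Fin 4) = 2 from by rw [hμ3]; decide]
        have := h3 (fun j => x (μ3 j))
        simp only [show ∀ j : Fin 4, μ3 (μ3 j) = j from by rw [hμ3]; decide] at this
        exact this.symm
    -- all swaps
    have Ps02 : ∀ (i : Fin 4) (x : Fin 4 → Fin k),
        c i x = c (Equiv.swap (0 : Fin 4) 2 i) fun j => x ((Equiv.swap (0 : Fin 4) 2)⁻¹ j) := by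
      rw [show Equiv.swap (0 : Fin 4) 2 = μ1 * (μ2 * μ1) from by rw [hμ1, hμ2]; decide]
      exact aux_mul c (μ2 * μ1) μ1 (aux_mul c μ1 μ2 Pμ1 Pμ2) Pμ1
    have Ps13 : ∀ (i : Fin 4) (x : Fin 4 → Fin k),
        c i x = c (Equiv.swap (1 : Fin 4) 3 i) fun j => x ((Equiv.swap (1 : Fin 4) 3)⁻¹ j) := by
      rw [show Equiv.swap (1 : Fin 4) 3 = μ2 * (μ3 * μ2) from by rw [hμ2, hμ3]; decide]
      exact aux_mul c (μ3 * μ2) μ2 (aux_mul c μ2 μ3 Pμ2 Pμ3) Pμ2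
    have Ps03 : ∀ (i : Fin 4) (x : Fin 4 → Fin k),
        c i x = c (Equiv.swap (0 : Fin 4) 3 i) fun j => x ((Equiv.swap (0 : Fin 4) 3)⁻¹ j) := by
      rw [show Equiv.swap (0 : Fin 4) 3 = μ3 * (Equiv.swap (0 : Fin 4) 2 * μ3) from by
        rw [hμ3]; decide]
      exact aux_mul c (Equiv.swap (0 : Fin 4) 2 * μ3) μ3
        (aux_mul c μ3 (Equiv.swap (0 : Fin 4) 2) Pμ3 Ps02) Pμ3
    have Pid : ∀ (i : Fin 4) (x : Fin 4 → Fin k),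
        c i x = c ((1 : Equiv.Perm (Fin 4)) i) fun j => x ((1 : Equiv.Perm (Fin 4))⁻¹ j) :=
      fun i x => rfl
    have hswap : ∀ a b : Fin 4, ∀ (i : Fin 4) (x : Fin 4 → Fin k),
        c i x = c (Equiv.swap a b i) fun j => x ((Equiv.swap a b)⁻¹ j) := by
      intro a b
      fin_cases a <;> fin_cases b
      · rw [Equiv.swap_self]; exact Pid
      · exact Pμ1
      · exact Ps02
      · exact Ps03
      · rw [Equiv.swap_comm]; exact Pμ1
      · rw [Equiv.swap_self]; exact Pid
      · exact Pμ2
      · exact Ps13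
      · rw [Equiv.swap_comm]; exact Ps02
      · rw [Equiv.swap_comm]; exact Pμ2
      · rw [Equiv.swap_self]; exact Pid
      · exact Pμ3
      · rw [Equiv.swap_comm]; exact Ps03
      · rw [Equiv.swap_comm]; exact Ps13
      · rw [Equiv.swap_comm]; exact Pμ3
      · rw [Equiv.swap_self]; exact Pid
    intro σ
    refine Equiv.Perm.swap_induction_on σ Pid ?_
    intro f a b hab hf
    exact aux_mul c f (Equiv.swap a b) hf (hswap a b)
end

section
/- Let k ≥ 1. The symmetric game subspace 𝒮_{[4;k]}, i.e., the linear subspace of all tuples (c_1, c_2, c_3, c_4) of payoff functions c_i : (Fin 4 → Fin k) → ℝ satisfying c_i(x) = c_{σ(i)}(x ∘ σ⁻¹) for every permutation σ of Fin 4, every i, and every strategy profile x, has dimension k · C(k+2, 3) over ℝ. -/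
/-- The symmetric game subspace 𝒮_{[n;k]}: the subspace of all tuples of payoff
functions c_i : (Fin n → Fin k) → ℝ with c_i(x) = c_{σ(i)}(x ∘ σ⁻¹) for every
permutation σ, every player i and every strategy profile x. -/
def symGameSubspace (n k : ℕ) : Submodule ℝ (Fin n → (Fin n → Fin k) → ℝ) where
  carrier := { c | ∀ (σ : Equiv.Perm (Fin n)) (i : Fin n) (x : Fin n → Fin k),
    c i x = c (σ i) (fun j => x (σ⁻¹ j)) }
  add_mem' := by
    intro c d hc hd σ i x
    simp only [Pi.add_apply, hc σ i x, hd σ i x]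
  zero_mem' := by intro σ i x; rfl
  smul_mem' := by
    intro a c hc σ i x
    simp only [Pi.smul_apply, hc σ i x]

/-!
A symmetric payoff `c i x` depends only on the player's *view* `(x i, {x l | l ≠ i})`, its own
strategy together with the multiset of the others' strategies: two profiles with the same view
differ by a permutation of the players moving one player onto the other. Conversely every
function of the view is a symmetric game, so `𝒮_{[n+1;k]}` is isomorphic to the space of
functions on `Fin k × Sym (Fin k) n`, of dimension `k · C(k+n-1, n)`.
-/

open Finset Equiv

theorem exists_perm_comp_eq_of_map_univ_eq {ι α : Type*} [Fintype ι] {f g : ι → α}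
    (h : univ.val.map f = univ.val.map g) : ∃ σ : Perm ι, g ∘ σ = f := by
  classical
  have hfib (a : α) : Fintype.card {i // f i = a} = Fintype.card {i // g i = a} := by
    have := congrArg (Multiset.count a) h
    simp only [Multiset.count_map, Fintype.card_subtype, card_def, filter_val] at this ⊢
    simpa only [eq_comm] using this
  exact ⟨ofFiberEquiv fun a => Fintype.equivOfCardEq (hfib a), funext (ofFiberEquiv_map _)⟩

theorem Multiset.exists_map_univ_eq {α : Type*} {n : ℕ} {s : Multiset α}
    (hs : Multiset.card s = n) : ∃ f : Fin n → α, univ.val.map f = s := by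
  subst hs
  refine ⟨fun i => s.toList.get (i.cast (by simp)), ?_⟩
  rw [Fin.univ_val_map, ← List.ofFn_congr (by simp), List.ofFn_get, Multiset.coe_toList]

namespace SymGame

variable {α : Type*} {n : ℕ}

def view (i : Fin (n + 1)) (x : Fin (n + 1) → α) : α × Sym α n :=
  (x i, Sym.mk ((univ.erase i).val.map x) (by simp))

theorem view_perm (σ : Perm (Fin (n + 1))) (i : Fin (n + 1)) (x : Fin (n + 1) → α) :
    view (σ i) (fun j => x (σ⁻¹ j)) = view i x := by
  refine Prod.ext (by simp [view]) (Subtype.ext ?_)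
  change (univ.erase (σ i)).val.map _ = (univ.erase i).val.map x
  have : univ.erase (σ i) = (univ.erase i).map σ.toEmbedding := by
    rw [map_erase, map_univ_equiv]; rfl
  rw [this, map_val, Multiset.map_map]
  simp [Function.comp_def]

theorem cons_view_snd (i : Fin (n + 1)) (x : Fin (n + 1) → α) :
    x i ::ₘ ((view i x).2 : Multiset α) = univ.val.map x := by
  rw [view, Sym.coe_mk, erase_val, ← Multiset.map_cons, Multiset.cons_erase (mem_univ _)]

theorem exists_perm_of_view_eq {i j : Fin (n + 1)} {x y : Fin (n + 1) → α}
    (h : view i x = view j y) : ∃ ρ : Perm (Fin (n + 1)), ρ j = i ∧ (fun l => x (ρ l)) = y := by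
  have hij : x i = y j := congrArg Prod.fst h
  obtain ⟨τ, hτ⟩ := exists_perm_comp_eq_of_map_univ_eq (f := y) (g := x) (by
    rw [← cons_view_snd j y, ← cons_view_snd i x, ← h, hij])
  have hτj : x (τ j) = x i := (congrFun hτ j).trans hij.symm
  -- `τ` matches the profiles; the swap fixes `x` because `x (τ j) = x i`, and makes `j ↦ i`.
  refine ⟨swap (τ j) i * τ, by simp, funext fun l => ?_⟩
  rw [← congrFun hτ l, Perm.mul_apply, Function.comp_apply]
  rcases eq_or_ne (τ l) (τ j) with hl | hl
  · rw [hl, swap_apply_left, hτj]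
  rcases eq_or_ne (τ l) i with hi | hi
  · rw [hi, swap_apply_right, hτj]
  · rw [swap_apply_of_ne_of_ne hl hi]

theorem apply_eq_of_view_eq {k : ℕ} {c : Fin (n + 1) → (Fin (n + 1) → Fin k) → ℝ}
    (hc : c ∈ symGameSubspace (n + 1) k) {i j : Fin (n + 1)} {x y : Fin (n + 1) → Fin k}
    (h : view i x = view j y) : c i x = c j y := by
  obtain ⟨ρ, rfl, rfl⟩ := exists_perm_of_view_eq h
  simpa using hc ρ⁻¹ (ρ j) x

theorem view_zero_surjective : Function.Surjective (view (α := α) (n := n) 0) := by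
  rintro ⟨a, m⟩
  obtain ⟨f, hf⟩ := Multiset.exists_map_univ_eq m.2
  refine ⟨Fin.cons a f, Prod.ext rfl (Subtype.ext ?_)⟩
  change (univ.erase 0).val.map (Fin.cons a f) = m
  rw [Fin.univ_succ, erase_cons, map_val, Multiset.map_map]
  simpa using hf

noncomputable def symGameSubspaceEquiv (n k : ℕ) :
    symGameSubspace (n + 1) k ≃ₗ[ℝ] (Fin k × Sym (Fin k) n → ℝ) where
  toFun c p := c.1 0 (Function.surjInv view_zero_surjective p)
  map_add' _ _ := rfl
  map_smul' _ _ := rfl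
  invFun f := ⟨fun i x => f (view i x), fun σ i x => by simp only [view_perm]⟩
  left_inv c := Subtype.ext <| funext₂ fun i x =>
    apply_eq_of_view_eq c.2 (Function.surjInv_eq _ _)
  right_inv f := funext fun p => congrArg f (Function.surjInv_eq _ p)

theorem finrank_symGameSubspace_succ (n k : ℕ) :
    Module.finrank ℝ (symGameSubspace (n + 1) k) = k * (k + n - 1).choose n := by
  rw [(symGameSubspaceEquiv n k).finrank_eq, Module.finrank_fintype_fun_eq_card,
    Fintype.card_prod, Fintype.card_fin, Sym.card_sym_eq_choose, Fintype.card_fin]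

end SymGame

theorem dim_symGameSubspace_four_general (k : ℕ) :
    Module.finrank ℝ (symGameSubspace 4 k) = k * (k + 2).choose 3 :=
  SymGame.finrank_symGameSubspace_succ 3 k

/-- for k ≥ 1 the symmetric game subspace 𝒮_{[4;k]} has dimension
k · C(k+2, 3) over ℝ. -/
theorem dim_symGameSubspace_four (k : ℕ) (hk : 1 ≤ k) :
    Module.finrank ℝ (symGameSubspace 4 k) = k * (k + 2).choose 3 :=
  dim_symGameSubspace_four_general k
end

section
/- Let n ≥ 2, k ≥ 1. For i ∈ Fin n and a strategy profile x : Fin n → Fin k, let d_i(x) : Fin (n−1) → Fin k denote x with its i-th coordinate deleted (d_i(x) = x ∘ Fin.succAbove i). For each orbit O of the action of S_{n−1} on profiles Fin (n−1) → Fin k and each strategy s ∈ Fin k, define the tuple c^{O,s} = (c^{O,s}_1, ..., c^{O,s}_n) of payoff functions by c^{O,s}_i(x) = 1 if d_i(x) ∈ O and x(i) = s, and c^{O,s}_i(x) = 0 otherwise. Then every c^{O,s} is a symmetric game, and the family {c^{O,s} : O an S_{n−1}-orbit, s ∈ Fin k} is a basis of the symmetric game subspace 𝒮_{[n;k]}.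 -/
/-- Two profiles are equivalent iff they lie in the same orbit of the action of S_m,
where σ acts by p ↦ p ∘ σ. -/
def orbitSetoid (m k : ℕ) : Setoid (Fin m → Fin k) where
  r p q := ∃ σ : Equiv.Perm (Fin m), q = p ∘ σ
  iseqv :=
    { refl := fun p => ⟨1, rfl⟩
      symm := by
        rintro p q ⟨σ, rfl⟩
        exact ⟨σ⁻¹, by funext j; simp⟩
      trans := by
        rintro p q r ⟨σ, rfl⟩ ⟨τ, rfl⟩
        exact ⟨σ * τ, rfl⟩ }

open Classical in
/-- The symmetric game c^{O,s} for an S_{n−1}-orbit O of reduced profiles and a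
strategy s : its i-th payoff function takes value 1 at a profile x iff the deleted
profile d_i(x) = x ∘ Fin.succAbove i lies in O and x(i) = s, and 0 otherwise.
(Here n = m + 1.) -/
noncomputable def basisGame (m k : ℕ) (O : Quotient (orbitSetoid m k)) (s : Fin k) :
    Fin (m + 1) → (Fin (m + 1) → Fin k) → ℝ :=
  fun i x =>
    if Quotient.mk (orbitSetoid m k) (x ∘ Fin.succAbove i) = O ∧ x i = s then 1 else 0

open Equiv

section FiberIndicator

variable {ι α Z : Type*}

noncomputable def fiberIndicator (T : ι → α → Z) (z : Z) : ι → α → ℝ :=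
  open Classical in fun i a => if T i a = z then 1 else 0

lemma linearIndependent_fiberIndicator (T : ι → α → Z) (hT : ∀ z, ∃ i a, T i a = z) :
    LinearIndependent ℝ (fiberIndicator T) := by
  classical
  rw [linearIndependent_iff']
  intro s g hsum z hz
  obtain ⟨i, a, rfl⟩ := hT z
  simpa [Finset.sum_apply, fiberIndicator, hz] using congrFun (congrFun hsum i) a

lemma comp_mem_span_fiberIndicator [Finite Z] (T : ι → α → Z) (g : Z → ℝ) :
    (fun i a => g (T i a)) ∈ Submodule.span ℝ (Set.range (fiberIndicator T)) := by
  classical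
  have := Fintype.ofFinite Z
  refine (Submodule.mem_span_range_iff_exists_fun ℝ).mpr ⟨g, funext₂ fun i a => ?_⟩
  simp [Finset.sum_apply, fiberIndicator]

end FiberIndicator

variable {m k : ℕ}

def profileType (i : Fin (m + 1)) (x : Fin (m + 1) → Fin k) :
    Quotient (orbitSetoid m k) × Fin k :=
  (Quotient.mk _ (x ∘ i.succAbove), x i)

lemma basisGame_eq_fiberIndicator (O : Quotient (orbitSetoid m k)) (s : Fin k) :
    basisGame m k O s = fiberIndicator profileType (O, s) := by
  funext i x
  unfold basisGame fiberIndicator profileType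
  -- the two conditions carry unrelated classical `Decidable` instances, which `simp` cannot align
  congr 1
  exact propext Prod.mk_inj.symm

lemma profileType_zero_cons (z : Quotient (orbitSetoid m k) × Fin k) :
    profileType 0 (Fin.cons z.2 z.1.out : Fin (m + 1) → Fin k) = z := by
  simp [profileType, Fin.succAbove_zero]

lemma exists_perm_succAbove_eq (σ : Perm (Fin (m + 1))) (i : Fin (m + 1)) :
    ∃ τ : Perm (Fin m), ∀ l, σ (i.succAbove l) = (σ i).succAbove (τ l) := by
  let e : Perm (Option (Fin m)) := (finSuccEquiv' i).symm.trans (σ.trans (finSuccEquiv' (σ i)))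
  refine ⟨removeNone e, fun l => ?_⟩
  obtain h | ⟨l', hl'⟩ := Fin.eq_self_or_eq_succAbove (σ i) (σ (i.succAbove l))
  · exact absurd (σ.injective h) (Fin.succAbove_ne i l)
  · have he : e (some l) = some l' := by simp [e, hl']
    rw [hl', ← Option.some_inj.mp ((removeNone_some e ⟨l', he⟩).trans he)]

lemma exists_perm_apply_eq_succAbove (i j : Fin (m + 1)) (τ : Perm (Fin m)) :
    ∃ σ : Perm (Fin (m + 1)), σ i = j ∧ ∀ l, σ (i.succAbove l) = j.succAbove (τ l) :=
  ⟨(finSuccEquiv' i).trans (τ.optionCongr.trans (finSuccEquiv' j).symm), by simp, by simp⟩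

lemma profileType_perm (σ : Perm (Fin (m + 1))) (i : Fin (m + 1)) (x : Fin (m + 1) → Fin k) :
    profileType (σ i) (x ∘ ⇑σ⁻¹) = profileType i x := by
  obtain ⟨τ, hτ⟩ := exists_perm_succAbove_eq σ⁻¹ (σ i)
  simp only [Perm.coe_inv, symm_apply_apply] at hτ
  refine Prod.ext (Quotient.sound ⟨τ⁻¹, funext fun l => ?_⟩) (by simp [profileType])
  simp [hτ]

lemma exists_perm_of_profileType_eq {i j : Fin (m + 1)} {x y : Fin (m + 1) → Fin k}
    (h : profileType i x = profileType j y) : ∃ σ : Perm (Fin (m + 1)), σ i = j ∧ y ∘ σ = x := by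
  obtain ⟨horbit, hi⟩ := Prod.ext_iff.mp h
  obtain ⟨ρ, hρ⟩ := Quotient.exact horbit
  obtain ⟨σ, hσi, hσ⟩ := exists_perm_apply_eq_succAbove i j ρ⁻¹
  refine ⟨σ, hσi, funext fun l => ?_⟩
  obtain rfl | ⟨l, rfl⟩ := Fin.eq_self_or_eq_succAbove i l
  · simpa [hσi, profileType] using hi.symm
  · simpa [hσ] using congrFun hρ (ρ⁻¹ l)

lemma apply_eq_of_profileType_eq {c : Fin (m + 1) → (Fin (m + 1) → Fin k) → ℝ}
    (hc : c ∈ symGameSubspace (m + 1) k) {i j : Fin (m + 1)} {x y : Fin (m + 1) → Fin k}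
    (h : profileType i x = profileType j y) : c i x = c j y := by
  obtain ⟨σ, rfl, rfl⟩ := exists_perm_of_profileType_eq h
  simpa using hc σ i (y ∘ σ)

lemma fiberIndicator_profileType_mem (z : Quotient (orbitSetoid m k) × Fin k) :
    fiberIndicator profileType z ∈ symGameSubspace (m + 1) k := by
  intro σ i x
  simp only [fiberIndicator]
  rw [← profileType_perm σ i x]
  rfl

theorem basisGame_basis_general (m k : ℕ) :
    (∀ (O : Quotient (orbitSetoid m k)) (s : Fin k),
        basisGame m k O s ∈ symGameSubspace (m + 1) k) ∧
    LinearIndependent ℝ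
      (fun z : Quotient (orbitSetoid m k) × Fin k => basisGame m k z.1 z.2) ∧
    Submodule.span ℝ
        (Set.range (fun z : Quotient (orbitSetoid m k) × Fin k => basisGame m k z.1 z.2))
      = symGameSubspace (m + 1) k := by
  simp only [basisGame_eq_fiberIndicator, Prod.mk.eta]
  refine ⟨fun O s => fiberIndicator_profileType_mem (O, s),
    linearIndependent_fiberIndicator _ fun z => ⟨0, _, profileType_zero_cons z⟩, ?_⟩
  refine le_antisymm (Submodule.span_le.mpr ?_) fun c hc => ?_
  · rintro _ ⟨z, rfl⟩
    exact fiberIndicator_profileType_mem z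
  · convert comp_mem_span_fiberIndicator profileType fun z => c 0 (Fin.cons z.2 z.1.out) using 1
    exact funext₂ fun i x => apply_eq_of_profileType_eq hc (profileType_zero_cons _).symm

/-- for n = m+1 ≥ 2 and k ≥ 1, every c^{O,s} is a symmetric game, and the
family {c^{O,s}} indexed by the S_{n−1}-orbits O and the strategies s ∈ Fin k is a basis
of the symmetric game subspace 𝒮_{[n;k]}: it is linearly independent and spans it. -/
theorem basisGame_basis (m k : ℕ) (hm : 1 ≤ m) (hk : 1 ≤ k) :
    (∀ (O : Quotient (orbitSetoid m k)) (s : Fin k),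
        basisGame m k O s ∈ symGameSubspace (m + 1) k) ∧
    LinearIndependent ℝ
      (fun z : Quotient (orbitSetoid m k) × Fin k => basisGame m k z.1 z.2) ∧
    Submodule.span ℝ
        (Set.range (fun z : Quotient (orbitSetoid m k) × Fin k => basisGame m k z.1 z.2))
      = symGameSubspace (m + 1) k :=
  basisGame_basis_general m k
end

section
/- Let k ≥ 1 and let c_1, c_2, c_3, c_4 : (Fin 4 → Fin k) → ℝ be the payoff functions of a game G ∈ 𝒢_{[4;k]}. Then G is symmetric if and only if: (i) c_1(x) = c_2(x ∘ μ_1), c_2(x) = c_3(x ∘ μ_2), and c_3(x) = c_4(x ∘ μ_3) for every profile x; and (ii) for every nondecreasing triple p : Fin 3 → Fin k, every q in the S_3-orbit of p, and every s ∈ Fin k, c_4 takes the same value on the profile whose first three coordinates are p and last coordinate is s as on the profile whose first three coordinates are q and last coordinate is s. -/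
/-!
Condition (i) chains the adjacent transpositions: every payoff `c i` equals `c last` precomposed
with a permutation sending `last` to `i`. Symmetry therefore reduces to invariance of `c last`
under the stabiliser of `last`, that is, under permutations of the first `n` coordinates. By (ii),
`c last` takes the same value at `(p ∘ σ, s)` as at the sorted tuple `(p ∘ sort p, s)`, for every
permutation `σ`.
-/

open Equiv

namespace Fin

variable {n : ℕ}

theorem extendDomain_finSuccAboveEquiv_last (σ : Perm (Fin n)) :
    σ.extendDomain (finSuccAboveEquiv (last n)) (last n) = last n :=
  Perm.extendDomain_apply_not_subtype _ _ (not_not.2 rfl)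

theorem extendDomain_finSuccAboveEquiv_castSucc (σ : Perm (Fin n)) (i : Fin n) :
    σ.extendDomain (finSuccAboveEquiv (last n)) i.castSucc = (σ i).castSucc := by
  simpa [finSuccAboveEquiv_apply] using
    Perm.extendDomain_apply_image σ (finSuccAboveEquiv (last n)) i

theorem snoc_comp_extendDomain_finSuccAboveEquiv {α : Type*} (p : Fin n → α) (s : α)
    (σ : Perm (Fin n)) :
    snoc p s ∘ σ.extendDomain (finSuccAboveEquiv (last n)) = snoc (p ∘ σ) s := by
  funext j
  cases j using lastCases <;>
    simp [extendDomain_finSuccAboveEquiv_last, extendDomain_finSuccAboveEquiv_castSucc]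

theorem exists_extendDomain_finSuccAboveEquiv_eq {π : Perm (Fin (n + 1))}
    (hπ : π (last n) = last n) :
    ∃ σ : Perm (Fin n), σ.extendDomain (finSuccAboveEquiv (last n)) = π := by
  have hne : ∀ j, π j ≠ last n ↔ j ≠ last n := fun j => by
    rw [← hπ, π.injective.ne_iff, hπ]
  refine ⟨(finSuccAboveEquiv (last n)).symm.permCongr (π.subtypePerm hne), Equiv.ext fun j => ?_⟩
  cases j using lastCases with
  | last => rw [extendDomain_finSuccAboveEquiv_last, hπ]
  | cast i =>
    simp [extendDomain_finSuccAboveEquiv_castSucc, finSuccAboveEquiv_apply,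
      finSuccAboveEquiv_symm_apply_last]

end Fin

section Games

variable {ι α β : Type*}

def IsSymmetricGame (c : ι → (ι → α) → β) : Prop :=
  ∀ (σ : Perm ι) (i : ι) (x : ι → α), c i x = c (σ i) (fun j => x (σ⁻¹ j))

namespace IsSymmetricGame

variable {c : ι → (ι → α) → β}

theorem apply_eq_apply_comp_swap [DecidableEq ι] (h : IsSymmetricGame c) (i j : ι)
    (x : ι → α) : c i x = c j (x ∘ swap i j) := by
  simpa [swap_inv, Function.comp_def] using h (swap i j) i x

theorem apply_comp_of_apply_eq (h : IsSymmetricGame c) {j : ι} {π : Perm ι} (hπ : π j = j)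
    (x : ι → α) : c j x = c j (x ∘ π) := by
  simpa [Perm.inv_eq_iff_eq.2 hπ.symm, Function.comp_def] using h π⁻¹ j x

theorem of_transport (j₀ : ι)
    (htrans : ∀ i, ∃ ρ : Perm ι, ρ j₀ = i ∧ ∀ x, c i x = c j₀ (x ∘ ρ))
    (hstab : ∀ π : Perm ι, π j₀ = j₀ → ∀ x, c j₀ x = c j₀ (x ∘ π)) :
    IsSymmetricGame c := by
  intro σ i x
  obtain ⟨ρ₁, hρ₁, e₁⟩ := htrans i
  obtain ⟨ρ₂, hρ₂, e₂⟩ := htrans (σ i)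
  have hfix : (ρ₁⁻¹ * σ⁻¹ * ρ₂) j₀ = j₀ := by simp [Perm.mul_apply, hρ₂, ← hρ₁]
  rw [e₁, e₂, hstab _ hfix]
  congr 1
  funext j
  simp

end IsSymmetricGame

end Games

section LastPlayer

variable {n : ℕ} {α β : Type*}

theorem exists_transport_to_last {c : Fin (n + 1) → (Fin (n + 1) → α) → β}
    (hadj : ∀ (i : Fin n) (x : Fin (n + 1) → α),
      c i.castSucc x = c i.succ (x ∘ swap i.castSucc i.succ))
    (i : Fin (n + 1)) :
    ∃ ρ : Perm (Fin (n + 1)), ρ (Fin.last n) = i ∧ ∀ x, c i x = c (Fin.last n) (x ∘ ρ) := by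
  induction i using Fin.reverseInduction with
  | last => exact ⟨1, rfl, fun x => rfl⟩
  | cast i ih =>
    obtain ⟨ρ, hρ, e⟩ := ih
    refine ⟨swap i.castSucc i.succ * ρ, by simp [Perm.mul_apply, hρ], fun x => ?_⟩
    rw [hadj, e]
    rfl

theorem apply_snoc_comp_perm_of_sorted [LinearOrder α] {f : (Fin (n + 1) → α) → β}
    (hsorted : ∀ p q : Fin n → α, Monotone p → (∃ σ : Perm (Fin n), q = p ∘ σ) →
      ∀ s, f (Fin.snoc p s) = f (Fin.snoc q s))
    (p : Fin n → α) (σ : Perm (Fin n)) (s : α) :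
    f (Fin.snoc p s) = f (Fin.snoc (p ∘ σ) s) := by
  have hmono := Tuple.monotone_sort p
  rw [← hsorted _ p hmono ⟨(Tuple.sort p)⁻¹, by ext; simp⟩ s,
    hsorted _ (p ∘ σ) hmono ⟨(Tuple.sort p)⁻¹ * σ, by ext; simp⟩ s]

theorem apply_comp_of_apply_last_eq {f : (Fin (n + 1) → α) → β}
    (hperm : ∀ (p : Fin n → α) (σ : Perm (Fin n)) (s : α),
      f (Fin.snoc p s) = f (Fin.snoc (p ∘ σ) s))
    {π : Perm (Fin (n + 1))} (hπ : π (Fin.last n) = Fin.last n) (x : Fin (n + 1) → α) :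
    f x = f (x ∘ π) := by
  obtain ⟨σ, rfl⟩ := Fin.exists_extendDomain_finSuccAboveEquiv_eq hπ
  rw [← Fin.snoc_init_self x, Fin.snoc_comp_extendDomain_finSuccAboveEquiv]
  exact hperm _ _ _

theorem isSymmetricGame_iff [LinearOrder α] (c : Fin (n + 1) → (Fin (n + 1) → α) → β) :
    IsSymmetricGame c ↔
      (∀ (i : Fin n) (x : Fin (n + 1) → α),
        c i.castSucc x = c i.succ (x ∘ swap i.castSucc i.succ)) ∧
      (∀ p q : Fin n → α, Monotone p → (∃ σ : Perm (Fin n), q = p ∘ σ) →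
        ∀ s, c (Fin.last n) (Fin.snoc p s) = c (Fin.last n) (Fin.snoc q s)) := by
  refine ⟨fun h => ⟨fun i => h.apply_eq_apply_comp_swap _ _, ?_⟩,
    fun ⟨hadj, hsorted⟩ => .of_transport (Fin.last n) (exists_transport_to_last hadj)
      fun _ hπ => apply_comp_of_apply_last_eq (apply_snoc_comp_perm_of_sorted hsorted) hπ⟩
  rintro p _ - ⟨σ, rfl⟩ s
  rw [← Fin.snoc_comp_extendDomain_finSuccAboveEquiv]
  exact h.apply_comp_of_apply_eq (Fin.extendDomain_finSuccAboveEquiv_last σ) _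

end LastPlayer

theorem symmetric_four_player_minimal_test_general (k : ℕ)
    (c : Fin 4 → (Fin 4 → Fin k) → ℝ) :
    (∀ (σ : Equiv.Perm (Fin 4)) (i : Fin 4) (x : Fin 4 → Fin k),
        c i x = c (σ i) (fun j => x (σ⁻¹ j))) ↔
    ((∀ x : Fin 4 → Fin k,
        c 0 x = c 1 (fun j => x (Equiv.swap (0 : Fin 4) 1 j)) ∧
        c 1 x = c 2 (fun j => x (Equiv.swap (1 : Fin 4) 2 j)) ∧
        c 2 x = c 3 (fun j => x (Equiv.swap (2 : Fin 4) 3 j))) ∧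
     (∀ p q : Fin 3 → Fin k, Monotone p →
        (∃ σ : Equiv.Perm (Fin 3), q = p ∘ σ) →
        ∀ s : Fin k, c 3 (Fin.snoc p s) = c 3 (Fin.snoc q s))) := by
  refine (isSymmetricGame_iff c).trans (and_congr_left' ⟨fun h x => ⟨h 0 x, h 1 x, h 2 x⟩, ?_⟩)
  intro h i x
  fin_cases i
  exacts [(h x).1, (h x).2.1, (h x).2.2]

/-- G ∈ 𝒢_{[4;k]} is symmetric iff
(i) c₁(x) = c₂(x∘μ₁), c₂(x) = c₃(x∘μ₂), c₃(x) = c₄(x∘μ₃) for every profile x, and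
(ii) for every nondecreasing triple p : Fin 3 → Fin k, every q in the S₃-orbit of p and
every s ∈ Fin k, c₄ takes the same value on (p, s) as on (q, s) (profiles formed by
appending s as the last coordinate, via `Fin.snoc`).
Players 1,2,3,4 are the indices 0,1,2,3 of `Fin 4`; μ₁ = swap 0 1, μ₂ = swap 1 2,
μ₃ = swap 2 3 in 0-based coordinates. -/
theorem symmetric_four_player_minimal_test (k : ℕ) (hk : 1 ≤ k)
    (c : Fin 4 → (Fin 4 → Fin k) → ℝ) :
    (∀ (σ : Equiv.Perm (Fin 4)) (i : Fin 4) (x : Fin 4 → Fin k),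
        c i x = c (σ i) (fun j => x (σ⁻¹ j))) ↔
    ((∀ x : Fin 4 → Fin k,
        c 0 x = c 1 (fun j => x (Equiv.swap (0 : Fin 4) 1 j)) ∧
        c 1 x = c 2 (fun j => x (Equiv.swap (1 : Fin 4) 2 j)) ∧
        c 2 x = c 3 (fun j => x (Equiv.swap (2 : Fin 4) 3 j))) ∧
     (∀ p q : Fin 3 → Fin k, Monotone p →
        (∃ σ : Equiv.Perm (Fin 3), q = p ∘ σ) →
        ∀ s : Fin k, c 3 (Fin.snoc p s) = c 3 (Fin.snoc q s))) :=
  symmetric_four_player_minimal_test_general k c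
end
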